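/- There exists a constant C > 0 such that for every Schwartz function f : ℝ³ → ℝ, ‖f‖_{L^∞(ℝ³)} ≤ C·( Σ_{α∈ℕ³, α₃=0, |α|≤2} ‖∂^α f‖_{L²}² )^{1/4} · ( Σ_{α∈ℕ³, α₃=0, |α|≤2} ‖∂^α ∂₃ f‖_{L²}² )^{1/4}; that is, ‖f‖_{L^∞} ≲ ‖f‖_{H²_tan}^{1/2} ‖∂₃ f‖_{H²_tan}^{1/2}. (Tangential Sobolev embedding repeatedly used in the energy estimates, e.g. for ‖b‖_{L^∞}.) -/

import Mathlib

/-!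
Write `|f(x)|² = |f²(x)|` and integrate successively along the three coordinate lines through
`x` (fundamental theorem of calculus, using the decay of Schwartz functions at infinity); by
Fubini this gives `|f(x)|² ≤ ‖∂₁∂₂∂₃(f²)‖_{L¹}`. By the Leibniz rule, `∂₁∂₂∂₃(f²)` is a sum of
eight products `∂^α f · ∂^β ∂₃f` with `α, β ≤ (1, 1)` tangential, and Cauchy–Schwarz bounds each
of them in `L¹` by `‖f‖_{H²_tan} ‖∂₃f‖_{H²_tan}`.
-/

open MeasureTheory SchwartzMap

noncomputable section

/-- Partial derivative of a Schwartz function on `ℝ³` in the `i`-th coordinate direction. -/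
def pd3 (i : Fin 3) (f : SchwartzMap (EuclideanSpace ℝ (Fin 3)) ℝ) :
    SchwartzMap (EuclideanSpace ℝ (Fin 3)) ℝ :=
  LineDeriv.lineDerivOp (EuclideanSpace.single i (1 : ℝ)) f

/-- Iterated tangential partial derivative `∂₁^a ∂₂^b f`. -/
def dtan (a b : ℕ) (f : SchwartzMap (EuclideanSpace ℝ (Fin 3)) ℝ) :
    SchwartzMap (EuclideanSpace ℝ (Fin 3)) ℝ :=
  (pd3 0)^[a] ((pd3 1)^[b] f)

/-- The `L²` norm (w.r.t. Lebesgue measure on `ℝ³`). -/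
def L2 (f : SchwartzMap (EuclideanSpace ℝ (Fin 3)) ℝ) : ℝ :=
  (eLpNorm f 2 volume).toReal

/-- The `L^∞` (essential supremum) norm. -/
def Linf (f : SchwartzMap (EuclideanSpace ℝ (Fin 3)) ℝ) : ℝ :=
  (eLpNorm f ⊤ volume).toReal

/-- Tangential multi-indices `α = (α₁, α₂)` (i.e. `α₃ = 0`) with `|α| ≤ m`. -/
def multiIdx2 (m : ℕ) : Finset (ℕ × ℕ) :=
  ((Finset.range (m+1)) ×ˢ (Finset.range (m+1))).filter (fun a => a.1 + a.2 ≤ m)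

/-- The squared tangential Sobolev norm `‖f‖_{H^k_tan}² = Σ_{α₃=0,|α|≤k} ‖∂^α f‖²`. -/
def HtanSq (k : ℕ) (f : SchwartzMap (EuclideanSpace ℝ (Fin 3)) ℝ) : ℝ :=
  ∑ a ∈ multiIdx2 k, L2 (dtan a.1 a.2 f) ^ 2

open Filter Set LineDeriv
open scoped ENNReal

variable {E F : Type*} [NormedAddCommGroup E] [NormedSpace ℝ E]
  [NormedAddCommGroup F] [NormedSpace ℝ F]

theorem antilipschitzWith_const_add_smul {v : E} (hv : v ≠ 0) (x : E) :
    AntilipschitzWith ‖v‖₊⁻¹ fun t : ℝ => x + t • v :=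
  AntilipschitzWith.of_le_mul_dist fun s t => by
    rw [dist_add_left, dist_eq_norm, dist_eq_norm, ← sub_smul, norm_smul, mul_comm ‖s - t‖,
      NNReal.coe_inv, coe_nnnorm, inv_mul_cancel_left₀ (norm_ne_zero_iff.mpr hv)]

theorem Function.hasTemperateGrowth_const_add_smul (x v : E) :
    Function.HasTemperateGrowth fun t : ℝ => x + t • v :=
  (Function.HasTemperateGrowth.const x).add
    (ContinuousLinearMap.smulRight (ContinuousLinearMap.id ℝ ℝ) v).hasTemperateGrowth

namespace SchwartzMap

theorem enorm_le_lintegral_enorm_deriv [CompleteSpace F] (φ : 𝓢(ℝ, F)) (t : ℝ) :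
    ‖φ t‖ₑ ≤ ∫⁻ s, ‖deriv φ s‖ₑ := by
  have hφ : ∫ s in Iic t, deriv φ s = φ t := by
    rw [integral_Iic_of_hasDerivAt_of_tendsto' (fun s _ => φ.hasDerivAt s)
      (derivCLM ℝ F φ).integrable.integrableOn
      (φ.tendsto_cocompact.mono_left atBot_le_cocompact), sub_zero]
  calc ‖φ t‖ₑ = ‖∫ s in Iic t, deriv φ s‖ₑ := by rw [hφ]
    _ ≤ ∫⁻ s in Iic t, ‖deriv φ s‖ₑ := enorm_integral_le_lintegral_enorm _
    _ ≤ ∫⁻ s, ‖deriv φ s‖ₑ := setLIntegral_le_lintegral _ _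

theorem enorm_le_lintegral_enorm_lineDerivOp [CompleteSpace F] (f : 𝓢(E, F)) {v : E}
    (hv : v ≠ 0) (x : E) : ‖f x‖ₑ ≤ ∫⁻ t : ℝ, ‖∂_{v} f (x + t • v)‖ₑ := by
  set φ : 𝓢(ℝ, F) := compCLMOfAntilipschitz ℝ (Function.hasTemperateGrowth_const_add_smul x v)
    (antilipschitzWith_const_add_smul hv x) f
  have hderiv (t : ℝ) : deriv φ t = ∂_{v} f (x + t • v) := by
    have hline : HasDerivAt (fun s : ℝ => x + s • v) v t := by
      simpa using ((hasDerivAt_id t).smul_const v).const_add x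
    rw [lineDerivOp_apply_eq_fderiv]
    exact ((f.hasFDerivAt (x + t • v)).comp_hasDerivAt t hline).deriv
  calc ‖f x‖ₑ = ‖φ 0‖ₑ := by simp [φ]
    _ ≤ ∫⁻ t, ‖deriv φ t‖ₑ := φ.enorm_le_lintegral_enorm_deriv 0
    _ = ∫⁻ t : ℝ, ‖∂_{v} f (x + t • v)‖ₑ := by simp only [hderiv]

theorem lineDerivOp_pairing {F₁ F₂ : Type*} [NormedAddCommGroup F₁] [NormedSpace ℝ F₁]
    [NormedAddCommGroup F₂] [NormedSpace ℝ F₂] (B : F₁ →L[ℝ] F₂ →L[ℝ] F) (u : 𝓢(E, F₁))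
    (w : 𝓢(E, F₂)) (m : E) :
    ∂_{m} (pairing B u w) = pairing B (∂_{m} u) w + pairing B u (∂_{m} w) := by
  ext x
  simp only [lineDerivOp_apply_eq_fderiv, add_apply, pairing_apply_apply]
  rw [pairing_apply, (B.hasFDerivAt_of_bilinear (u.hasFDerivAt x) (w.hasFDerivAt x)).fderiv]
  simp [add_comm]

section eLpNorm

variable [MeasurableSpace E] [BorelSpace E] (μ : Measure E)

theorem eLpNorm_add_le [SecondCountableTopologyEither E F] (u w : 𝓢(E, F)) {p : ℝ≥0∞}
    (hp : 1 ≤ p) : eLpNorm (u + w) p μ ≤ eLpNorm u p μ + eLpNorm w p μ :=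
  MeasureTheory.eLpNorm_add_le u.continuous.aestronglyMeasurable
    w.continuous.aestronglyMeasurable hp

theorem eLpNorm_pairing_mul_le (u w : 𝓢(E, ℝ)) {p q r : ℝ≥0∞} [ENNReal.HolderTriple p q r] :
    eLpNorm (pairing (.mul ℝ ℝ) u w) r μ ≤ eLpNorm u p μ * eLpNorm w q μ := by
  rw [show ⇑(pairing (.mul ℝ ℝ) u w) = ⇑u • ⇑w from rfl]
  exact eLpNorm_smul_le_mul_eLpNorm w.continuous.aestronglyMeasurable
    u.continuous.aestronglyMeasurable

end eLpNorm

end SchwartzMap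

local notation "ℝ³" => EuclideanSpace ℝ (Fin 3)
local notation "𝐞" i:max => EuclideanSpace.single (i : Fin 3) (1 : ℝ)

theorem lintegral_lintegral_lintegral_add_single {h : ℝ³ → ℝ≥0∞} (hh : Measurable h) (x : ℝ³) :
    ∫⁻ t₂ : ℝ, ∫⁻ t₁ : ℝ, ∫⁻ t₀ : ℝ, h (x + t₂ • 𝐞 2 + t₁ • 𝐞 1 + t₀ • 𝐞 0) = ∫⁻ y, h y := by
  set K : (Fin 3 → ℝ) → ℝ≥0∞ := fun z => h (x + WithLp.toLp 2 z)
  have hK : Measurable K := hh.comp ((PiLp.volume_preserving_toLp (Fin 3)).measurable.const_add x)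
  have hpoint (t₀ t₁ t₂ : ℝ) : x + t₂ • 𝐞 2 + t₁ • 𝐞 1 + t₀ • 𝐞 0 = x + WithLp.toLp 2
      (Function.update (Function.update (Function.update (0 : Fin 3 → ℝ) 2 t₂) 1 t₁) 0 t₀) := by
    ext j; fin_cases j <;> simp [Function.update]
  have huniv : (Finset.univ : Finset (Fin 3)) = {2, 1, 0} := by decide
  calc _ = (∫⋯∫⁻_{2, 1, 0}, K ∂fun _ => volume) 0 := by
        simp only [lmarginal_insert _ hK (by decide : (2 : Fin 3) ∉ ({1, 0} : Finset (Fin 3))),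
          lmarginal_insert _ hK (by decide : (1 : Fin 3) ∉ ({0} : Finset (Fin 3))),
          lmarginal_singleton, hpoint, K]
    _ = ∫⁻ z, K z := by rw [volume_pi, lintegral_eq_lmarginal_univ 0, huniv]
    _ = ∫⁻ y, h (x + y) :=
        (PiLp.volume_preserving_toLp (Fin 3)).lintegral_comp (hh.comp (measurable_const_add x))
    _ = ∫⁻ y, h y := lintegral_add_left_eq_self h x

theorem enorm_le_eLpNorm_one_pd3_pd3_pd3 (g : 𝓢(ℝ³, ℝ)) (x : ℝ³) :
    ‖g x‖ₑ ≤ eLpNorm (pd3 0 (pd3 1 (pd3 2 g))) 1 volume := by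
  have hne (i : Fin 3) : 𝐞 i ≠ 0 := by simp
  calc ‖g x‖ₑ ≤ ∫⁻ t₂ : ℝ, ‖pd3 2 g (x + t₂ • 𝐞 2)‖ₑ :=
        g.enorm_le_lintegral_enorm_lineDerivOp (hne 2) x
    _ ≤ ∫⁻ t₂ : ℝ, ∫⁻ t₁ : ℝ, ‖pd3 1 (pd3 2 g) (x + t₂ • 𝐞 2 + t₁ • 𝐞 1)‖ₑ :=
        lintegral_mono fun _ => (pd3 2 g).enorm_le_lintegral_enorm_lineDerivOp (hne 1) _
    _ ≤ ∫⁻ t₂ : ℝ, ∫⁻ t₁ : ℝ, ∫⁻ t₀ : ℝ,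
          ‖pd3 0 (pd3 1 (pd3 2 g)) (x + t₂ • 𝐞 2 + t₁ • 𝐞 1 + t₀ • 𝐞 0)‖ₑ :=
        lintegral_mono fun _ => lintegral_mono fun _ =>
          (pd3 1 (pd3 2 g)).enorm_le_lintegral_enorm_lineDerivOp (hne 0) _
    _ = eLpNorm (pd3 0 (pd3 1 (pd3 2 g))) 1 volume := by
        rw [eLpNorm_one_eq_lintegral_enorm]
        exact lintegral_lintegral_lintegral_add_single
          (pd3 0 (pd3 1 (pd3 2 g))).continuous.measurable.enorm x

theorem eLpNorm_one_pd3_pd3_pairing_mul_le (u w : 𝓢(ℝ³, ℝ)) {A B : ℝ≥0∞}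
    (hu : ∀ a b, a ≤ 1 → b ≤ 1 → eLpNorm (dtan a b u) 2 volume ≤ A)
    (hw : ∀ a b, a ≤ 1 → b ≤ 1 → eLpNorm (dtan a b w) 2 volume ≤ B) :
    eLpNorm (pd3 0 (pd3 1 (pairing (.mul ℝ ℝ) u w))) 1 volume ≤ 4 * (A * B) := by
  have hprod {u' w' : 𝓢(ℝ³, ℝ)} (hu' : eLpNorm u' 2 volume ≤ A) (hw' : eLpNorm w' 2 volume ≤ B) :
      eLpNorm (pairing (.mul ℝ ℝ) u' w') 1 volume ≤ A * B :=
    (eLpNorm_pairing_mul_le _ u' w').trans (mul_le_mul' hu' hw')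
  simp only [pd3, lineDerivOp_pairing, lineDerivOp_add]
  grw [eLpNorm_add_le _ _ _ le_rfl, eLpNorm_add_le _ _ _ le_rfl, eLpNorm_add_le _ _ _ le_rfl]
  refine (add_le_add (add_le_add (hprod ?_ ?_) (hprod ?_ ?_))
    (add_le_add (hprod ?_ ?_) (hprod ?_ ?_))).trans_eq (by ring)
  exacts [hu 1 1 le_rfl le_rfl, hw 0 0 zero_le_one zero_le_one,
    hu 0 1 zero_le_one le_rfl, hw 1 0 le_rfl zero_le_one,
    hu 1 0 le_rfl zero_le_one, hw 0 1 zero_le_one le_rfl,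
    hu 0 0 zero_le_one zero_le_one, hw 1 1 le_rfl le_rfl]

theorem eLpNorm_dtan_le_sqrt_HtanSq {k a b : ℕ} (hab : a + b ≤ k) (g : 𝓢(ℝ³, ℝ)) :
    eLpNorm (dtan a b g) 2 volume ≤ ENNReal.ofReal √(HtanSq k g) := by
  have hmem : (a, b) ∈ multiIdx2 k := by
    simp only [multiIdx2, Finset.mem_filter, Finset.mem_product, Finset.mem_range]; omega
  have hsq : L2 (dtan a b g) ^ 2 ≤ HtanSq k g := by
    unfold HtanSq
    simpa using Finset.single_le_sum (f := fun p : ℕ × ℕ => L2 (dtan p.1 p.2 g) ^ 2)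
      (fun _ _ => sq_nonneg _) hmem
  rw [← ENNReal.ofReal_toReal ((dtan a b g).memLp 2 _).eLpNorm_ne_top]
  exact ENNReal.ofReal_le_ofReal (Real.le_sqrt_of_sq_le hsq)

theorem sq_norm_le_eight_mul_sqrt_HtanSq (f : 𝓢(ℝ³, ℝ)) (x : ℝ³) :
    ‖f x‖ ^ 2 ≤ 8 * √(HtanSq 2 f) * √(HtanSq 2 (pd3 2 f)) := by
  set p := pd3 2 f
  have hf (a b : ℕ) (ha : a ≤ 1) (hb : b ≤ 1) :=
    eLpNorm_dtan_le_sqrt_HtanSq (by omega : a + b ≤ 2) f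
  have hp (a b : ℕ) (ha : a ≤ 1) (hb : b ≤ 1) :=
    eLpNorm_dtan_le_sqrt_HtanSq (by omega : a + b ≤ 2) p
  have hsq : ENNReal.ofReal (‖f x‖ ^ 2) = ‖pairing (.mul ℝ ℝ) f f x‖ₑ := by
    simp [← ofReal_norm, sq]
  have key : ENNReal.ofReal (‖f x‖ ^ 2) ≤
      8 * (ENNReal.ofReal √(HtanSq 2 f) * ENNReal.ofReal √(HtanSq 2 p)) := by
    calc ENNReal.ofReal (‖f x‖ ^ 2)
        ≤ eLpNorm (pd3 0 (pd3 1 (pd3 2 (pairing (.mul ℝ ℝ) f f)))) 1 volume :=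
          hsq ▸ enorm_le_eLpNorm_one_pd3_pd3_pd3 _ x
      _ ≤ eLpNorm (pd3 0 (pd3 1 (pairing (.mul ℝ ℝ) p f))) 1 volume
          + eLpNorm (pd3 0 (pd3 1 (pairing (.mul ℝ ℝ) f p))) 1 volume := by
          simp only [p, pd3, lineDerivOp_pairing, lineDerivOp_add]
          exact eLpNorm_add_le _ _ _ le_rfl
      _ ≤ 4 * (ENNReal.ofReal √(HtanSq 2 p) * ENNReal.ofReal √(HtanSq 2 f))
          + 4 * (ENNReal.ofReal √(HtanSq 2 f) * ENNReal.ofReal √(HtanSq 2 p)) :=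
          add_le_add (eLpNorm_one_pd3_pd3_pairing_mul_le p f hp hf)
            (eLpNorm_one_pd3_pd3_pairing_mul_le f p hf hp)
      _ = _ := by ring
  rwa [← ENNReal.ofReal_mul (Real.sqrt_nonneg _), ← ENNReal.ofReal_ofNat 8,
    ← ENNReal.ofReal_mul (by norm_num), ENNReal.ofReal_le_ofReal_iff (by positivity),
    ← mul_assoc] at key

theorem Linf_le_of_forall_norm_le {f : 𝓢(ℝ³, ℝ)} {C : ℝ} (hC : 0 ≤ C) (h : ∀ x, ‖f x‖ ≤ C) :
    Linf f ≤ C := by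
  rw [Linf, eLpNorm_exponent_top]
  exact ENNReal.toReal_le_of_le_ofReal hC (eLpNormEssSup_le_of_ae_bound (.of_forall h))

/-- Tangential Sobolev embedding: `‖f‖_{L^∞} ≲ ‖f‖_{H²_tan}^{1/2} ‖∂₃f‖_{H²_tan}^{1/2}`. -/
theorem tangential_sobolev_embedding :
    ∃ C : ℝ, 0 < C ∧ ∀ f : SchwartzMap (EuclideanSpace ℝ (Fin 3)) ℝ,
      Linf f ≤ C * HtanSq 2 f ^ (1/4 : ℝ) * HtanSq 2 (pd3 2 f) ^ (1/4 : ℝ) := by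
  refine ⟨√8, by positivity, fun f => ?_⟩
  have hX : 0 ≤ HtanSq 2 f := Finset.sum_nonneg fun _ _ => sq_nonneg _
  have hY : 0 ≤ HtanSq 2 (pd3 2 f) := Finset.sum_nonneg fun _ _ => sq_nonneg _
  refine Linf_le_of_forall_norm_le (by positivity) fun x => ?_
  have hsq : (√8 * HtanSq 2 f ^ (1/4 : ℝ) * HtanSq 2 (pd3 2 f) ^ (1/4 : ℝ)) ^ 2
      = 8 * √(HtanSq 2 f) * √(HtanSq 2 (pd3 2 f)) := by
    rw [mul_pow, mul_pow, Real.sq_sqrt (by norm_num), ← Real.rpow_mul_natCast hX,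
      ← Real.rpow_mul_natCast hY, Real.sqrt_eq_rpow, Real.sqrt_eq_rpow]
    norm_num
  exact le_of_pow_le_pow_left₀ two_ne_zero (by positivity)
    ((sq_norm_le_eight_mul_sqrt_HtanSq f x).trans_eq hsq.symm)

end
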